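/- Each birational toggle φ_x on (ℝ⁺)^P preserves the quantity Σ{f(w)/f(y) : w, y ∈ P̂, w ⋖ y}, with f(0̂) = f(1̂) = 1. -/

import Mathlib

open Classical

variable {P : Type*} [PartialOrder P]

/-- The augmented poset `P̂ = P ∪ {0̂, 1̂}`. -/
abbrev Phat (P : Type*) := WithBot (WithTop P)

/-- The embedding of `P` into `P̂`. -/
def toPhat (x : P) : Phat P := ((x : WithTop P) : Phat P)

/-- Extension of `f : P → ℝ` to `P̂` with `f(0̂) = f(1̂) = 1`. -/
def bfhat (f : P → ℝ) : Phat P → ℝ :=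
  WithBot.recBotCoe 1 (WithTop.recTopCoe 1 f)

instance [Fintype P] : Fintype (Phat P) :=
  inferInstanceAs (Fintype (Option (Option P)))

/-- `L`: the ordinary sum of `f` over elements of `P̂` covered by `x`. -/
noncomputable def bL [Fintype P] (f : P → ℝ) (x : P) : ℝ :=
  ∑ y ∈ Finset.univ.filter (fun y : Phat P => y ⋖ toPhat x), bfhat f y

/-- `R`: the parallel sum of `f` over elements of `P̂` covering `x`
(for positive reals, the inverse of the sum of the inverses). -/
noncomputable def bR [Fintype P] (f : P → ℝ) (x : P) : ℝ :=
  (∑ y ∈ Finset.univ.filter (fun y : Phat P => toPhat x ⋖ y), (bfhat f y)⁻¹)⁻¹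

/-- The birational toggle at `x`. -/
noncomputable def bToggle [Fintype P] (x : P) (f : P → ℝ) : P → ℝ :=
  Function.update f x (bL f x * bR f x / f x)

/-- The quantity `Σ {f(w)/f(y) : w ⋖ y in P̂}`. -/
noncomputable def coverRatioSum [Fintype P] (f : P → ℝ) : ℝ :=
  ∑ p ∈ Finset.univ.filter (fun p : Phat P × Phat P => p.1 ⋖ p.2),
    bfhat f p.1 / bfhat f p.2

/-! Only the covering pairs through `x` involve `f x`. With `t = f x`, they contribute
`L / t + t / R`, where `L` and `R` are computed from the neighbours of `x` and so are not
changed by the toggle; replacing `t` by `L * R / t` swaps the two summands. -/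

theorem div_add_div_toggle {L R t : ℝ} (hL : L ≠ 0) (hR : R ≠ 0) (ht : t ≠ 0) :
    L / (L * R / t) + L * R / t / R = L / t + t / R := by
  field_simp
  ring

section CoverRatio

variable {α : Type*} [PartialOrder α] [DecidableEq α]

theorem update_div_update_of_covBy (F : α → ℝ) (a : α) (t : ℝ) {w y : α} (h : w ⋖ y) :
    Function.update F a t w / Function.update F a t y =
      (if y = a then F w / t else 0) + (if w = a then t * (F y)⁻¹ else 0)
        + (if w ≠ a ∧ y ≠ a then F w / F y else 0) := by
  by_cases hy : y = a
  · subst hy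
    simp [h.ne]
  · by_cases hw : w = a
    · subst hw
      simp [hy, div_eq_mul_inv]
    · simp [hy, hw]

theorem sum_covBy_div_update [Fintype α] (F : α → ℝ) (a : α) (t : ℝ) :
    ∑ p ∈ Finset.univ.filter (fun p : α × α => p.1 ⋖ p.2),
        Function.update F a t p.1 / Function.update F a t p.2 =
      (∑ w ∈ Finset.univ.filter (· ⋖ a), F w) / t
        + t / (∑ y ∈ Finset.univ.filter (a ⋖ ·), (F y)⁻¹)⁻¹
        + ∑ p ∈ Finset.univ.filter (fun p : α × α => p.1 ⋖ p.2 ∧ p.1 ≠ a ∧ p.2 ≠ a),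
            F p.1 / F p.2 := by
  rw [Finset.sum_congr rfl fun p hp =>
      update_div_update_of_covBy F a t (Finset.mem_filter.1 hp).2, div_inv_eq_mul]
  simp only [Finset.sum_add_distrib, Finset.sum_filter, Fintype.sum_prod_type, Finset.sum_div,
    Finset.mul_sum, ite_and, ite_div, zero_div]
  congr 2
  · refine Finset.sum_congr rfl fun w _ => ?_
    rw [Finset.sum_eq_single a] <;> simp_all
  · rw [Finset.sum_eq_single a] <;> simp_all

end CoverRatio

theorem bfhat_pos {Q : Type*} {f : Q → ℝ} (hf : ∀ z, 0 < f z) (y : Phat Q) :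
    0 < bfhat f y := by
  induction y using WithBot.recBotCoe with
  | bot => exact one_pos
  | coe z =>
    induction z using WithTop.recTopCoe with
    | top => exact one_pos
    | coe w => exact hf w

theorem bfhat_update {Q : Type*} (f : Q → ℝ) (x : Q) (v : ℝ) :
    bfhat (Function.update f x v) = Function.update (bfhat f) (toPhat x) v := by
  funext y
  induction y using WithBot.recBotCoe with
  | bot => simp [bfhat, toPhat]
  | coe z =>
    induction z using WithTop.recTopCoe with
    | top => exact (Function.update_of_ne (by simp [toPhat]) _ _).symm
    | coe w => rcases eq_or_ne w x with rfl | h <;> simp [bfhat, toPhat, *]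

theorem exists_covBy_toPhat [Finite P] (x : P) : ∃ w, w ⋖ toPhat x :=
  exists_covBy_of_wellFoundedGT (WithBot.bot_lt_coe _).not_isMin

theorem exists_toPhat_covBy [Finite P] (x : P) : ∃ y, toPhat x ⋖ y :=
  exists_covBy_of_wellFoundedLT (WithBot.coe_lt_coe.2 (WithTop.coe_lt_top x)).not_isMax

theorem bL_pos [Fintype P] {f : P → ℝ} (hf : ∀ z, 0 < f z) (x : P) : 0 < bL f x := by
  obtain ⟨w, hw⟩ := exists_covBy_toPhat x
  exact Finset.sum_pos (fun y _ => bfhat_pos hf y) ⟨w, by simpa using hw⟩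

theorem bR_pos [Fintype P] {f : P → ℝ} (hf : ∀ z, 0 < f z) (x : P) : 0 < bR f x := by
  obtain ⟨y, hy⟩ := exists_toPhat_covBy x
  exact inv_pos.2 <|
    Finset.sum_pos (fun y _ => inv_pos.2 (bfhat_pos hf y)) ⟨y, by simpa using hy⟩

theorem bToggle_preserves_coverRatioSum [Fintype P] (x : P) (f : P → ℝ)
    (hf : ∀ z, 0 < f z) :
    coverRatioSum (bToggle x f) = coverRatioSum f := by
  have hdecomp := sum_covBy_div_update (bfhat f) (toPhat x)
  have hf_eq : bfhat f = Function.update (bfhat f) (toPhat x) (f x) :=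
    (Function.update_eq_self _ _).symm
  rw [coverRatioSum, coverRatioSum, bToggle, bfhat_update, hdecomp]
  conv_rhs => rw [hf_eq, hdecomp]
  exact congrArg (· + _) <|
    div_add_div_toggle (bL_pos hf x).ne' (bR_pos hf x).ne' (hf x).ne'
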